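/- arXiv:1904.01315 — 5 statements merged into one kernel-verified Lean document; each statement's English description precedes it below -/
import Mathlib

section
/- Let e be a consistent comparison table on levels l_1,...,l_t, with fixed reference utilities u(l_p) and u(l_q) (p < q, u(l_p) < u(l_q)) and α = (u(l_q)-u(l_p))/(e(p,q)+1). Define u(l_k) = u(l_p) + (e(p,k)+1)α for k > p and u(l_k) = u(l_p) - (e(k,p)+1)α for k < p. Then u is strictly increasing: u(l_1) < u(l_2) < ... < u(l_t). -/
/-!
Measure every level by its signed distance from the reference level `p`, counted in steps of `α`:
`e(p,k) + 1` above `p`, `-(e(k,p) + 1)` below it. Consistency makes `e(p,k)` increase and `e(k,p)`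
decrease in `k`, so this offset is strictly increasing; `u` is the offset scaled by `α > 0` and
shifted by `u(l_p)`.
-/

def IsConsistentTable (t : ℕ) (e : ℕ → ℕ → ℕ) : Prop :=
  ∀ a b c, 1 ≤ a → a < b → b < c → c ≤ t → e a b + e b c + 1 = e a c

def signedOffset (e : ℕ → ℕ → ℕ) (p k : ℕ) : ℤ :=
  if p < k then e p k + 1 else if k < p then -((e k p : ℤ) + 1) else 0

theorem signedOffset_lt_succ {t : ℕ} {e : ℕ → ℕ → ℕ} (he : IsConsistentTable t e)
    {p k : ℕ} (hp : 1 ≤ p) (hpt : p ≤ t) (hk : 1 ≤ k) (hkt : k < t) :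
    signedOffset e p k < signedOffset e p (k + 1) := by
  unfold signedOffset
  rcases lt_trichotomy (k + 1) p with h | h | h
  · have := he k (k + 1) p hk (by omega) h hpt
    simp only [show ¬p < k by omega, show ¬p < k + 1 by omega, h, show k < p by omega,
      if_true, if_false]
    omega
  · simp only [show ¬p < k by omega, show k < p by omega, h, lt_irrefl, if_true, if_false]
    omega
  · rcases (Nat.lt_succ_iff.mp h).eq_or_lt with rfl | hpk
    · simp only [lt_irrefl, h, if_true, if_false]
      omega
    · have := he p k (k + 1) hp hpk (by omega) (by omega)
      simp only [hpk, h, if_true]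
      omega

theorem eq_add_signedOffset_mul {t : ℕ} {e : ℕ → ℕ → ℕ} {p : ℕ} {u : ℕ → ℝ} {α : ℝ}
    (huAbove : ∀ k, p < k → k ≤ t → u k = u p + ((e p k : ℝ) + 1) * α)
    (huBelow : ∀ k, 1 ≤ k → k < p → u k = u p - ((e k p : ℝ) + 1) * α)
    {k : ℕ} (hk : 1 ≤ k) (hkt : k ≤ t) :
    u k = u p + signedOffset e p k * α := by
  unfold signedOffset
  rcases lt_trichotomy p k with h | rfl | h
  · simp [h, huAbove k h hkt]
  · simp
  · simp only [huBelow k hk h, h.not_gt, h, if_true, if_false]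
    push_cast
    ring

theorem stmt_4 (t : ℕ) (e : ℕ → ℕ → ℕ)
    (hcons : ∀ a b c, 1 ≤ a → a < b → b < c → c ≤ t →
      e a b + e b c + 1 = e a c)
    (p q : ℕ) (hp : 1 ≤ p) (hpq : p < q) (hq : q ≤ t)
    (u : ℕ → ℝ) (hupq : u p < u q)
    (α : ℝ) (hα : α = (u q - u p) / ((e p q : ℝ) + 1))
    (huAbove : ∀ k, p < k → k ≤ t → u k = u p + ((e p k : ℝ) + 1) * α)
    (huBelow : ∀ k, 1 ≤ k → k < p → u k = u p - ((e k p : ℝ) + 1) * α) :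
    ∀ k, 1 ≤ k → k < t → u k < u (k + 1) := by
  intro k hk hkt
  have hα_pos : 0 < α := hα ▸ div_pos (sub_pos.mpr hupq) (by positivity)
  have hoffset : (signedOffset e p k : ℝ) < signedOffset e p (k + 1) := by
    exact_mod_cast signedOffset_lt_succ hcons hp (by omega) hk hkt
  rw [eq_add_signedOffset_mul huAbove huBelow hk hkt.le,
    eq_add_signedOffset_mul huAbove huBelow (by omega) hkt]
  gcongr
end

section
/- Let G be a finite set of criteria, O a set of unordered pairs of distinct criteria, and m a Möbius representation with m({g}) for g ∈ G and m({g_i,g_j}) for {g_i,g_j} ∈ O (zero on all other subsets). If (i) for every g ∈ G and every T ⊆ G \ {g}, m({g}) + ∑_{g_i ∈ T, {g_i,g} ∈ O} m({g_i,g}) ≥ 0, then the set function μ(A) = ∑_{g ∈ A} m({g}) + ∑_{{g_i,g_j} ⊆ A, {g_i,g_j} ∈ O} m({g_i,g_j}) is monotone: A ⊆ B ⊆ G implies μ(A) ≤ μ(B). -/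
/-!
Adding a criterion `g ∉ A` to `A` adds `m {g}` together with the interactions `m {gᵢ, g}` of
the pairs `{gᵢ, g} ∈ O` with `gᵢ ∈ A`, which is exactly the quantity assumed nonnegative.
So `μ` grows along every one-element extension, hence is monotone.
-/

open Finset

section TwoAdditive

variable {ι : Type*} [DecidableEq ι]

lemma Finset.exists_eq_pair_of_card_eq_two {p : Finset ι} {g : ι} (hp : #p = 2) (hg : g ∈ p) :
    ∃ x, x ≠ g ∧ p = {x, g} := by
  obtain ⟨x, hx⟩ := card_eq_one.1 (by rw [card_erase_of_mem hg, hp] : #(p.erase g) = 1)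
  refine ⟨x, ne_of_mem_erase (hx ▸ mem_singleton_self x), ?_⟩
  rw [pair_comm, ← hx, insert_erase hg]

variable {β : Type*} [AddCommMonoid β] {O : Finset (Finset ι)}

def twoAdditive (O : Finset (Finset ι)) (m : Finset ι → β) (A : Finset ι) : β :=
  ∑ g ∈ A, m {g} + ∑ p ∈ O.filter (· ⊆ A), m p

lemma image_pair_eq_filter_subset_insert (hO : ∀ p ∈ O, #p = 2) {g : ι} {A : Finset ι} :
    (A.filter fun x => {x, g} ∈ O).image (fun x => ({x, g} : Finset ι)) =
      O.filter fun p => p ⊆ insert g A ∧ g ∈ p := by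
  ext p
  simp only [mem_image, mem_filter]
  constructor
  · rintro ⟨x, ⟨hxA, hxO⟩, rfl⟩
    refine ⟨hxO, insert_subset (mem_insert_of_mem hxA) ?_, mem_insert_of_mem (mem_singleton_self g)⟩
    exact singleton_subset_iff.2 (mem_insert_self g A)
  · rintro ⟨hpO, hpA, hgp⟩
    obtain ⟨x, hxg, rfl⟩ := exists_eq_pair_of_card_eq_two (hO p hpO) hgp
    have hx : x ∈ insert g A := hpA (mem_insert_self x {g})
    exact ⟨x, ⟨(mem_insert.1 hx).resolve_left hxg, hpO⟩, rfl⟩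

lemma sum_filter_subset_insert (hO : ∀ p ∈ O, #p = 2) (m : Finset ι → β) {g : ι}
    {A : Finset ι} (hg : g ∉ A) :
    ∑ p ∈ O.filter (· ⊆ insert g A), m p =
      ∑ p ∈ O.filter (· ⊆ A), m p + ∑ x ∈ A.filter (fun x => {x, g} ∈ O), m {x, g} := by
  rw [← sum_filter_not_add_sum_filter _ (g ∈ ·), filter_filter, filter_filter]
  congr 1
  · refine sum_congr (filter_congr fun p _ => ?_) fun _ _ => rfl
    exact ⟨fun h => (subset_insert_iff_of_notMem h.2).1 h.1,
      fun h => ⟨h.trans (subset_insert g A), fun hgp => hg (h hgp)⟩⟩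
  · rw [← image_pair_eq_filter_subset_insert hO, sum_image]
    intro x hx y hy hxy
    have hxy : ({x, g} : Finset ι) = {y, g} := hxy
    have hx' : x ∈ ({y, g} : Finset ι) := hxy ▸ mem_insert_self x {g}
    simp only [mem_insert, mem_singleton] at hx'
    exact hx'.resolve_right fun h => hg (h ▸ (mem_filter.1 hx).1)

lemma twoAdditive_insert (hO : ∀ p ∈ O, #p = 2) (m : Finset ι → β) {g : ι} {A : Finset ι}
    (hg : g ∉ A) :
    twoAdditive O m (insert g A) =
      twoAdditive O m A + (m {g} + ∑ x ∈ A.filter (fun x => {x, g} ∈ O), m {x, g}) := by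
  simp only [twoAdditive, sum_insert hg, sum_filter_subset_insert hO m hg]
  abel

theorem monotone_twoAdditive [PartialOrder β] [IsOrderedAddMonoid β] (hO : ∀ p ∈ O, #p = 2)
    {m : Finset ι → β}
    (hm : ∀ g (A : Finset ι), g ∉ A →
      0 ≤ m {g} + ∑ x ∈ A.filter (fun x => {x, g} ∈ O), m {x, g}) :
    Monotone (twoAdditive O m) :=
  monotone_iff_forall_le_insert.2 fun A g hg => by
    rw [twoAdditive_insert hO m hg]
    exact le_add_of_nonneg_right (hm g A hg)

end TwoAdditive

theorem stmt_7_general {ι : Type*} [DecidableEq ι]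
    (O : Finset (Finset ι)) (hO : ∀ p ∈ O, p.card = 2)
    (m : Finset ι → ℝ)
    (μ : Finset ι → ℝ)
    (hμ : ∀ A, μ A = (∑ g ∈ A, m {g}) + ∑ p ∈ O.filter (fun p => p ⊆ A), m p)
    (hmono : ∀ g : ι, ∀ T : Finset ι, g ∉ T →
      0 ≤ m {g} + ∑ gi ∈ T.filter (fun gi => {gi, g} ∈ O), m {gi, g}) :
    ∀ A B : Finset ι, A ⊆ B → μ A ≤ μ B := by
  obtain rfl : μ = twoAdditive O m := funext hμ
  exact fun _ _ hAB => monotone_twoAdditive hO hmono hAB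

theorem stmt_7 {ι : Type*} [Fintype ι] [DecidableEq ι]
    (O : Finset (Finset ι)) (hO : ∀ p ∈ O, p.card = 2)
    (m : Finset ι → ℝ)
    (μ : Finset ι → ℝ)
    (hμ : ∀ A, μ A = (∑ g ∈ A, m {g}) + ∑ p ∈ O.filter (fun p => p ⊆ A), m p)
    (hmono : ∀ g : ι, ∀ T : Finset ι, g ∉ T →
      0 ≤ m {g} + ∑ gi ∈ T.filter (fun gi => {gi, g} ∈ O), m {gi, g}) :
    ∀ A B : Finset ι, A ⊆ B → μ A ≤ μ B :=
  stmt_7_general O hO m μ hμ hmono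
end

section
/- For a 2-additive capacity μ with Möbius transform m (nonzero only on singletons and pairs), and for any vector u = (u_1,...,u_n) ∈ [0,1]^n, the Choquet integral C_μ(u) = ∑_{j=1}^n (u_{(j)} - u_{(j-1)})·μ(N_j) (with u_{(0)}=0, (·) a nondecreasing ordering of the u_j, and N_j = {i : u_i ≥ u_{(j)}}) equals ∑_{j=1}^n u_j·m({j}) + ∑_{i<j} min(u_i,u_j)·m({i,j}). -/
lemma aux_key_9 {n : ℕ} (u : Fin n → ℝ) (σ : Equiv.Perm (Fin n))
    (hσ : ∀ i j : Fin n, i ≤ j → u (σ i) ≤ u (σ j))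
    (T : Finset (Fin n)) (hT : T.Nonempty) :
    (∑ j : Fin n, if T ⊆ Finset.univ.filter (fun i => u (σ j) ≤ u i)
      then (u (σ j) - (if h : (j : ℕ) = 0 then 0 else
        u (σ ⟨(j : ℕ) - 1, Nat.lt_of_le_of_lt (Nat.sub_le _ _) j.2⟩))) else 0)
    = T.inf' hT u := by
  classical
  set c : ℝ := T.inf' hT u with hc
  have hcond : ∀ j : Fin n,
      (T ⊆ Finset.univ.filter (fun i => u (σ j) ≤ u i)) ↔ u (σ j) ≤ c := by
    intro j
    constructor
    · intro h
      rw [hc, Finset.le_inf'_iff]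
      intro b hb
      have := h hb
      simpa using this
    · intro h i hi
      simp only [Finset.mem_filter, Finset.mem_univ, true_and]
      exact h.trans (Finset.inf'_le u hi)
  obtain ⟨i0, hi0, hci0⟩ := T.exists_mem_eq_inf' hT u
  have hi0c : u i0 ≤ c := by rw [hc, hci0]
  set S : Finset (Fin n) := Finset.univ.filter (fun j => u (σ j) ≤ c) with hSdef
  have hS : S.Nonempty := ⟨σ.symm i0, by
    simp only [hSdef, Finset.mem_filter, Finset.mem_univ, true_and,
      Equiv.apply_symm_apply]
    exact hi0c⟩
  set K : Fin n := S.max' hS with hKdef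
  have hKS : K ∈ S := S.max'_mem hS
  have hKc : u (σ K) ≤ c := by
    have := hKS
    simpa [hSdef] using this
  have hcK : c ≤ u (σ K) := by
    have h1 : σ.symm i0 ∈ S := by
      simp only [hSdef, Finset.mem_filter, Finset.mem_univ, true_and,
        Equiv.apply_symm_apply]
      exact hi0c
    have h2 : σ.symm i0 ≤ K := S.le_max' _ h1
    have h3 := hσ _ _ h2
    rw [Equiv.apply_symm_apply] at h3
    rw [hc, hci0]
    exact h3
  have hKc' : u (σ K) = c := le_antisymm hKc hcK
  have hmemS : ∀ j : Fin n, u (σ j) ≤ c ↔ (j : ℕ) ≤ (K : ℕ) := by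
    intro j
    constructor
    · intro h
      exact S.le_max' j (by simp [hSdef, h])
    · intro h
      exact (hσ j K h).trans hKc
  set W : ℕ → ℝ := fun t => if h : 0 < t ∧ t ≤ n then u (σ ⟨t - 1, by omega⟩) else 0
    with hW
  have hW1 : ∀ j : Fin n, W ((j : ℕ) + 1) = u (σ j) := by
    intro j
    have hj : (j : ℕ) < n := j.2
    rw [hW]
    simp only
    rw [dif_pos (by omega : 0 < (j : ℕ) + 1 ∧ (j : ℕ) + 1 ≤ n)]
    exact congrArg (fun x => u (σ x)) (Fin.ext (by simp))
  have hW0 : W 0 = 0 := by rw [hW]; simp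
  have hd : ∀ j : Fin n,
      (u (σ j) - (if h : (j : ℕ) = 0 then 0 else
        u (σ ⟨(j : ℕ) - 1, Nat.lt_of_le_of_lt (Nat.sub_le _ _) j.2⟩)))
      = W ((j : ℕ) + 1) - W (j : ℕ) := by
    intro j
    have hj : (j : ℕ) < n := j.2
    rw [hW1 j]
    congr 1
    by_cases h0 : (j : ℕ) = 0
    · rw [dif_pos h0, hW]
      simp only
      rw [h0, dif_neg (by omega)]
    · rw [dif_neg h0, hW]
      simp only
      rw [dif_pos (by omega : 0 < (j : ℕ) ∧ (j : ℕ) ≤ n)]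
  calc (∑ j : Fin n, if T ⊆ Finset.univ.filter (fun i => u (σ j) ≤ u i)
      then (u (σ j) - (if h : (j : ℕ) = 0 then 0 else
        u (σ ⟨(j : ℕ) - 1, Nat.lt_of_le_of_lt (Nat.sub_le _ _) j.2⟩))) else 0)
      = ∑ j : Fin n, (fun t : ℕ => if t ≤ (K : ℕ) then W (t + 1) - W t else 0) (j : ℕ) := by
        refine Finset.sum_congr rfl fun j _ => ?_
        simp only [hcond, hmemS, hd]
    _ = ∑ t ∈ Finset.range n, (fun t : ℕ => if t ≤ (K : ℕ) then W (t + 1) - W t else 0) t :=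
        Fin.sum_univ_eq_sum_range (fun t : ℕ => if t ≤ (K : ℕ) then W (t + 1) - W t else 0) n
    _ = ∑ t ∈ (Finset.range n).filter (fun t => t ≤ (K : ℕ)), (W (t + 1) - W t) := by
        rw [Finset.sum_filter]
    _ = ∑ t ∈ Finset.range ((K : ℕ) + 1), (W (t + 1) - W t) := by
        congr 1
        ext t
        simp only [Finset.mem_filter, Finset.mem_range]
        have := K.2
        omega
    _ = W ((K : ℕ) + 1) - W 0 := Finset.sum_range_sub W ((K : ℕ) + 1)
    _ = c := by rw [hW1 K, hW0, sub_zero, hKc']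

theorem stmt_9 (n : ℕ) (u : Fin n → ℝ) (hu : ∀ i, u i ∈ Set.Icc (0:ℝ) 1)
    (m : Finset (Fin n) → ℝ)
    (hm2 : ∀ T : Finset (Fin n), 2 < T.card → m T = 0)
    (hm0 : m ∅ = 0)
    (μ : Finset (Fin n) → ℝ)
    (hμ : ∀ A, μ A = ∑ T ∈ A.powerset, m T)
    (σ : Equiv.Perm (Fin n))
    (hσ : ∀ i j : Fin n, i ≤ j → u (σ i) ≤ u (σ j)) :
    (∑ j : Fin n,
      (u (σ j) - (if h : (j : ℕ) = 0 then 0 else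
        u (σ ⟨(j : ℕ) - 1, Nat.lt_of_le_of_lt (Nat.sub_le _ _) j.2⟩))) *
        μ (Finset.univ.filter (fun i => u (σ j) ≤ u i)))
    = (∑ j : Fin n, u j * m {j}) +
      ∑ p ∈ (Finset.univ : Finset (Fin n × Fin n)).filter (fun p => p.1 < p.2),
        min (u p.1) (u p.2) * m {p.1, p.2} := by
  classical
  set d : Fin n → ℝ := fun j => (u (σ j) - (if h : (j : ℕ) = 0 then 0 else
    u (σ ⟨(j : ℕ) - 1, Nat.lt_of_le_of_lt (Nat.sub_le _ _) j.2⟩))) with hd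
  set N : Fin n → Finset (Fin n) :=
    fun j => Finset.univ.filter (fun i => u (σ j) ≤ u i) with hN
  set f : Finset (Fin n) → ℝ :=
    fun T => ∑ j : Fin n, if T ⊆ N j then d j else 0 with hf
  have hkey : ∀ (T : Finset (Fin n)) (hT : T.Nonempty), f T = T.inf' hT u :=
    fun T hT => aux_key_9 u σ hσ T hT
  have step1 : (∑ j : Fin n, d j * μ (N j)) = ∑ T : Finset (Fin n), m T * f T := by
    calc (∑ j : Fin n, d j * μ (N j))
        = ∑ j : Fin n, ∑ T : Finset (Fin n), (if T ⊆ N j then d j * m T else 0) := by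
          refine Finset.sum_congr rfl fun j _ => ?_
          rw [hμ, Finset.mul_sum]
          have hp : (N j).powerset = Finset.univ.filter (fun T => T ⊆ N j) := by
            ext T; simp [Finset.mem_powerset]
          rw [hp, Finset.sum_filter]
      _ = ∑ T : Finset (Fin n), ∑ j : Fin n, (if T ⊆ N j then d j * m T else 0) :=
          Finset.sum_comm
      _ = ∑ T : Finset (Fin n), m T * f T := by
          refine Finset.sum_congr rfl fun T _ => ?_
          rw [hf]
          simp only
          rw [Finset.mul_sum]
          refine Finset.sum_congr rfl fun j _ => ?_
          split_ifs
          · ring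
          · ring
  rw [step1]
  -- restrict to cards 1 and 2
  have step2 : (∑ T : Finset (Fin n), m T * f T)
      = ∑ T ∈ Finset.univ.filter (fun T : Finset (Fin n) => T.card = 1 ∨ T.card = 2),
          m T * f T := by
    symm
    apply Finset.sum_subset (Finset.filter_subset _ _)
    intro T _ hT
    simp only [Finset.mem_filter, Finset.mem_univ, true_and, not_or] at hT
    have hmT : m T = 0 := by
      rcases Nat.lt_or_ge T.card 1 with h | h
      · have : T = ∅ := Finset.card_eq_zero.mp (by omega)
        rw [this]; exact hm0
      · exact hm2 T (by omega)
    rw [hmT, zero_mul]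
  rw [step2, Finset.filter_or,
    Finset.sum_union (by
      rw [Finset.disjoint_left]
      intro T h1 h2
      simp only [Finset.mem_filter, Finset.mem_univ, true_and] at h1 h2
      omega)]
  congr 1
  · -- singletons
    have himg : Finset.univ.filter (fun T : Finset (Fin n) => T.card = 1)
        = Finset.univ.image (fun j : Fin n => ({j} : Finset (Fin n))) := by
      ext T
      simp only [Finset.mem_filter, Finset.mem_univ, true_and, Finset.mem_image,
        Finset.card_eq_one]
      tauto
    rw [himg, Finset.sum_image (fun a _ b _ h => Finset.singleton_injective h)]
    refine Finset.sum_congr rfl fun j _ => ?_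
    rw [hkey {j} (Finset.singleton_nonempty j), Finset.inf'_singleton, mul_comm]
  · -- pairs
    have himg : Finset.univ.filter (fun T : Finset (Fin n) => T.card = 2)
        = ((Finset.univ : Finset (Fin n × Fin n)).filter (fun p => p.1 < p.2)).image
            (fun p => ({p.1, p.2} : Finset (Fin n))) := by
      ext T
      simp only [Finset.mem_filter, Finset.mem_univ, true_and, Finset.mem_image,
        Finset.card_eq_two]
      constructor
      · rintro ⟨a, b, hab, rfl⟩
        rcases hab.lt_or_gt with h | h
        · exact ⟨(a, b), h, rfl⟩
        · exact ⟨(b, a), h, by rw [Finset.pair_comm]⟩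
      · rintro ⟨p, hp, rfl⟩
        exact ⟨p.1, p.2, ne_of_lt hp, rfl⟩
    have hinj : ∀ a ∈ (Finset.univ : Finset (Fin n × Fin n)).filter (fun p => p.1 < p.2),
        ∀ b ∈ (Finset.univ : Finset (Fin n × Fin n)).filter (fun p => p.1 < p.2),
        ({a.1, a.2} : Finset (Fin n)) = {b.1, b.2} → a = b := by
      intro a ha b hb h
      simp only [Finset.mem_filter, Finset.mem_univ, true_and] at ha hb
      have h1 : a.1 ∈ ({b.1, b.2} : Finset (Fin n)) := by
        rw [← h]; exact Finset.mem_insert_self _ _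
      have h2 : a.2 ∈ ({b.1, b.2} : Finset (Fin n)) := by
        rw [← h]; exact Finset.mem_insert_of_mem (Finset.mem_singleton_self _)
      have h3 : b.1 ∈ ({a.1, a.2} : Finset (Fin n)) := by
        rw [h]; exact Finset.mem_insert_self _ _
      simp only [Finset.mem_insert, Finset.mem_singleton] at h1 h2 h3
      have : a.1 = b.1 ∧ a.2 = b.2 := by
        rcases h1 with h1 | h1
        · rcases h2 with h2 | h2
          · exact absurd (h2 ▸ h1 ▸ ha) (lt_irrefl _)
          · exact ⟨h1, h2⟩
        · rcases h2 with h2 | h2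
          · exact absurd ((h1 ▸ ha).trans (h2 ▸ hb)) (lt_irrefl _)
          · exact absurd (h2 ▸ h1 ▸ ha) (lt_irrefl _)
      exact Prod.ext this.1 this.2
    rw [himg, Finset.sum_image hinj]
    refine Finset.sum_congr rfl fun p hp => ?_
    simp only [Finset.mem_filter, Finset.mem_univ, true_and] at hp
    rw [hkey {p.1, p.2} (Finset.insert_nonempty _ _)]
    rw [Finset.inf'_insert, Finset.inf'_singleton, mul_comm]
    exact Finset.singleton_nonempty _
end

section
/- Let t ≥ 3 and let interval bounds e^L, e^R : {(p,q) : 1 ≤ p < q ≤ t} → ℕ with e^L(p,q) ≤ e^R(p,q) be given. The interval table is intervally consistent (i.e., admits a selection e(p,q) ∈ [e^L(p,q), e^R(p,q)] satisfying e(p,k)+e(k,q)+1=e(p,q) for all p<k<q) if and only if there exist x_1,...,x_{t-1} ∈ ℕ such that for all p < q: e^L(p,q) ≤ (∑_{r=p}^{q-1}(x_r+1)) - 1 ≤ e^R(p,q). -/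
theorem stmt_15 (t : ℕ) (ht : 3 ≤ t) (eL eR : ℕ → ℕ → ℕ)
    (hLR : ∀ p q, 1 ≤ p → p < q → q ≤ t → eL p q ≤ eR p q) :
    (∃ e : ℕ → ℕ → ℕ,
      (∀ p q, 1 ≤ p → p < q → q ≤ t → eL p q ≤ e p q ∧ e p q ≤ eR p q) ∧
      (∀ p k q, 1 ≤ p → p < k → k < q → q ≤ t → e p k + e k q + 1 = e p q))
    ↔
    (∃ x : ℕ → ℕ, ∀ p q, 1 ≤ p → p < q → q ≤ t →
      eL p q ≤ (∑ r ∈ Finset.Ico p q, (x r + 1)) - 1 ∧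
      (∑ r ∈ Finset.Ico p q, (x r + 1)) - 1 ≤ eR p q) := by
  constructor
  · rintro ⟨e, hbound, hcons⟩
    refine ⟨fun r => e r (r + 1), ?_⟩
    have key : ∀ q p, 1 ≤ p → p < q → q ≤ t →
        (∑ r ∈ Finset.Ico p q, (e r (r + 1) + 1)) = e p q + 1 := by
      intro q
      induction q with
      | zero => intro p hp hpq hqt; omega
      | succ n ih =>
        intro p hp hpq hqt
        rcases Nat.lt_or_ge p n with h | h
        · rw [Finset.sum_Ico_succ_top (by omega), ih p hp h (by omega)]
          have := hcons p n (n + 1) hp h (by omega) hqt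
          omega
        · have hpn : p = n := by omega
          subst hpn
          simp
    intro p q hp hpq hqt
    have h1 := key q p hp hpq hqt
    have h2 := hbound p q hp hpq hqt
    dsimp only
    omega
  · rintro ⟨x, hx⟩
    refine ⟨fun p q => (∑ r ∈ Finset.Ico p q, (x r + 1)) - 1, ?_, ?_⟩
    · intro p q hp hpq hqt
      exact hx p q hp hpq hqt
    · intro p k q hp hpk hkq hqt
      have hsplit : (∑ r ∈ Finset.Ico p k, (x r + 1)) + ∑ r ∈ Finset.Ico k q, (x r + 1)
          = ∑ r ∈ Finset.Ico p q, (x r + 1) :=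
        Finset.sum_Ico_consecutive _ (by omega) (by omega)
      have h1 : 0 < ∑ r ∈ Finset.Ico p k, (x r + 1) :=
        Finset.sum_pos (fun i _ => Nat.succ_pos _) (Finset.nonempty_Ico.mpr hpk)
      have h2 : 0 < ∑ r ∈ Finset.Ico k q, (x r + 1) :=
        Finset.sum_pos (fun i _ => Nat.succ_pos _) (Finset.nonempty_Ico.mpr hkq)
      dsimp only
      omega
end

section
/- Let e be a consistent comparison table on t levels and define utilities by fixing u(l_1)=0, u(l_t)=U > 0, α = U/(e(1,t)+1), u(l_k) = (e(1,k)+1)·α for 1 < k < t. Then for every 1 ≤ p < q ≤ t, (u(l_q) - u(l_p))/(u(l_t) - u(l_1)) = (e(p,q)+1)/(e(1,t)+1); i.e., the ratio of utility differences between any two pairs of levels equals the ratio of their numbers of units. -/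
theorem stmt_17 (t : ℕ) (ht : 2 ≤ t) (e : ℕ → ℕ → ℕ)
    (hcons : ∀ p k q, 1 ≤ p → p < k → k < q → q ≤ t →
      e p k + e k q + 1 = e p q)
    (U : ℝ) (hU : 0 < U)
    (α : ℝ) (hα : α = U / ((e 1 t : ℝ) + 1))
    (u : ℕ → ℝ) (hu1 : u 1 = 0) (hut : u t = U)
    (hu : ∀ k, 1 < k → k < t → u k = ((e 1 k : ℝ) + 1) * α) :
    ∀ p q, 1 ≤ p → p < q → q ≤ t →
      (u q - u p) / (u t - u 1) = ((e p q : ℝ) + 1) / ((e 1 t : ℝ) + 1) := by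
  intro p q hp hpq hqt
  have hD : ((e 1 t : ℝ) + 1) ≠ 0 := by positivity
  have hUne : U ≠ 0 := ne_of_gt hU
  rw [hut, hu1, sub_zero]
  rcases eq_or_lt_of_le hp with hp1 | hp1
  · rcases eq_or_lt_of_le hqt with hqt1 | hqt1
    · subst hqt1
      rw [← hp1, hu1, hut, sub_zero, div_self hUne, div_self hD]
    · rw [← hp1, hu1, hu q (by omega) hqt1, hα, sub_zero]
      field_simp
  · have hup := hu p hp1 (by omega)
    rcases eq_or_lt_of_le hqt with hqt1 | hqt1
    · subst hqt1
      have hc := hcons 1 p q le_rfl hp1 hpq hqt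
      have hc' : (e 1 p : ℝ) + e p q + 1 = e 1 q := by exact_mod_cast hc
      rw [hut, hup, hα]
      field_simp
      linear_combination -hc'
    · have hc := hcons 1 p q le_rfl hp1 hpq (le_of_lt hqt1)
      have hc' : (e 1 p : ℝ) + e p q + 1 = e 1 q := by exact_mod_cast hc
      rw [hup, hu q (by omega) hqt1, hα]
      field_simp
      linear_combination -hc'
end
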